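/- (Lipschitz prefactor bound for the BBK head map.) Assume γ ≥ √(12M) and 0 < h < 1/(4γ). Define Ψ : ℝⁿ × ℝⁿ → ℝⁿ × ℝⁿ by Ψ(x, v) = ( x + h v, (1 + γh/2)^{-1}( v − (h/2)∇U(x + h v) ) ). Then with a = 1/M and b = h/2 + 1/γ, for all (x,v), (x̃,ṽ) ∈ ℝⁿ × ℝⁿ, ‖Ψ(x̃,ṽ) − Ψ(x,v)‖²_{a,b} ≤ 7 · ‖(x̃ − x, ṽ − v)‖²_{a,b}. -/

import Mathlib

/-!
The gradient is `M`-Lipschitz: the Hessian is symmetric with quadratic form in `[0, M‖d‖²]`, so its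
operator norm is at most `M`. Hence the position increment `ξ` of `Ψ` satisfies
`‖ξ‖ ≤ ‖Δx‖ + h‖Δv‖` and the velocity increment `w` satisfies `‖w‖ ≤ ‖Δv‖ + (h/2) M ‖ξ‖`.
Since `9 M b² ≤ 1`, Cauchy–Schwarz lets the cross term `2b⟨·,·⟩` absorb at most a third of
`‖·‖² + ‖·‖²/M` on either side, and `M h² ≤ 1/192` makes `‖ξ‖² + ‖w‖²/M ≤ 3 (‖Δx‖² + ‖Δv‖²/M)`;
together these give the factor `(4/3) · 3 / (2/3) = 6 ≤ 7`.
-/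

open scoped RealInnerProductSpace

/-- The squared modified Euclidean norm `‖(x,v)‖²_{a,b} = ‖x‖² + 2b⟨x,v⟩ + a‖v‖²`. -/
noncomputable def modNormSq {n : ℕ} (a b : ℝ)
    (z : EuclideanSpace ℝ (Fin n) × EuclideanSpace ℝ (Fin n)) : ℝ :=
  ‖z.1‖ ^ 2 + 2 * b * ⟪z.1, z.2⟫ + a * ‖z.2‖ ^ 2

section InnerProductSpace

variable {E : Type*} [NormedAddCommGroup E] [InnerProductSpace ℝ E]

theorem ContinuousLinearMap.opNorm_le_of_isSymmetric {T : E →L[ℝ] E} (hT : T.IsSymmetric)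
    {M : ℝ} (hM : 0 ≤ M) (hTM : ∀ x, |⟪T x, x⟫| ≤ M * ‖x‖ ^ 2) : ‖T‖ ≤ M := by
  rw [T.norm_eq_iSup_rayleighQuotient hT]
  refine ciSup_le fun x => ?_
  rw [rayleighQuotient, reApplyInnerSelf_apply, RCLike.re_to_real, abs_div, abs_sq]
  rcases eq_or_ne x 0 with rfl | hx
  · simpa using hM
  · exact div_le_of_le_mul₀ (by positivity) hM (hTM x)

variable [CompleteSpace E] {U : E → ℝ}

theorem inner_fderiv_gradient_apply (x u v : E) :
    ⟪fderiv ℝ (gradient U) x u, v⟫ = fderiv ℝ (fderiv ℝ U) x u v := by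
  have : gradient U = (InnerProductSpace.toDual ℝ E).symm ∘ fderiv ℝ U := rfl
  rw [this, LinearIsometryEquiv.comp_fderiv]
  exact InnerProductSpace.toDual_symm_apply

theorem ContDiffAt.isSymmetric_fderiv_gradient {x : E} (hU : ContDiffAt ℝ 2 U x) :
    (fderiv ℝ (gradient U) x).IsSymmetric := fun u v => by
  rw [ContinuousLinearMap.coe_coe, real_inner_comm _ u,
    inner_fderiv_gradient_apply, inner_fderiv_gradient_apply]
  exact hU.isSymmSndFDerivAt (by simp) u v

theorem norm_gradient_sub_le (hU : ContDiff ℝ 2 U) {M : ℝ} (hM : 0 ≤ M)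
    (hHess : ∀ x d, |⟪fderiv ℝ (gradient U) x d, d⟫| ≤ M * ‖d‖ ^ 2) (y z : E) :
    ‖gradient U y - gradient U z‖ ≤ M * ‖y - z‖ := by
  have hdiff : Differentiable ℝ (gradient U) :=
    (InnerProductSpace.toDual ℝ E).symm.differentiable.comp
      ((hU.fderiv_right (m := 1) (by norm_num)).differentiable (by norm_num))
  exact convex_univ.norm_image_sub_le_of_norm_fderiv_le (fun x _ => hdiff x)
    (fun x _ => ContinuousLinearMap.opNorm_le_of_isSymmetric
      hU.contDiffAt.isSymmetric_fderiv_gradient hM (hHess x)) (Set.mem_univ z) (Set.mem_univ y)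

end InnerProductSpace

section BBK

variable {E : Type*} [NormedAddCommGroup E] [NormedSpace ℝ E]

noncomputable def bbkHead (γ h : ℝ) (G : E → E) (z : E × E) : E × E :=
  (z.1 + h • z.2, (1 + γ * h / 2)⁻¹ • (z.2 - (h / 2) • G (z.1 + h • z.2)))

variable {γ h : ℝ} {G : E → E}

theorem norm_bbkHead_sub_fst_le (hh : 0 ≤ h) (z z' : E × E) :
    ‖(bbkHead γ h G z' - bbkHead γ h G z).1‖ ≤ ‖(z' - z).1‖ + h * ‖(z' - z).2‖ := by
  have : (bbkHead γ h G z' - bbkHead γ h G z).1 = (z' - z).1 + h • (z' - z).2 := by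
    simp only [bbkHead, Prod.fst_sub, Prod.snd_sub]
    module
  rw [this]
  grw [norm_add_le, norm_smul, Real.norm_of_nonneg hh]

theorem norm_bbkHead_sub_snd_le (hγ : 0 ≤ γ) (hh : 0 ≤ h) {M : ℝ}
    (hG : ∀ y y', ‖G y' - G y‖ ≤ M * ‖y' - y‖) (z z' : E × E) :
    ‖(bbkHead γ h G z' - bbkHead γ h G z).2‖ ≤
      ‖(z' - z).2‖ + h / 2 * M * ‖(bbkHead γ h G z' - bbkHead γ h G z).1‖ := by
  set c := 1 + γ * h / 2
  have hc : 1 ≤ c := le_add_of_nonneg_right (by positivity)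
  have hsnd : (bbkHead γ h G z' - bbkHead γ h G z).2 =
      c⁻¹ • ((z' - z).2 - (h / 2) • (G (bbkHead γ h G z').1 - G (bbkHead γ h G z).1)) := by
    simp only [bbkHead, Prod.snd_sub]
    module
  have hfst : (bbkHead γ h G z' - bbkHead γ h G z).1 =
      (bbkHead γ h G z').1 - (bbkHead γ h G z).1 := rfl
  rw [hsnd, hfst, norm_smul, Real.norm_of_nonneg (by positivity)]
  calc c⁻¹ * ‖(z' - z).2 - (h / 2) • (G (bbkHead γ h G z').1 - G (bbkHead γ h G z).1)‖
      ≤ ‖(z' - z).2 - (h / 2) • (G (bbkHead γ h G z').1 - G (bbkHead γ h G z).1)‖ :=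
        mul_le_of_le_one_left (norm_nonneg _) (inv_le_one_of_one_le₀ hc)
    _ ≤ _ := by
        grw [norm_sub_le, norm_smul, Real.norm_of_nonneg (by positivity), hG, mul_assoc]

end BBK

theorem two_mul_mul_le {M b : ℝ} (hM : 0 < M) (hb : 9 * M * b ^ 2 ≤ 1) (u v : ℝ) :
    2 * b * (u * v) ≤ (u ^ 2 + v ^ 2 / M) / 3 := by
  field_simp
  nlinarith [sq_nonneg (M * u - 3 * b * M * v),
    mul_nonneg (mul_nonneg hM.le (sq_nonneg v)) (sub_nonneg.2 hb)]

theorem sq_add_sq_div_le {M h s t X Y : ℝ} (hM : 0 < M) (hh : M * h ^ 2 ≤ 1 / 192)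
    (hX0 : 0 ≤ X) (hY0 : 0 ≤ Y) (hX : X ≤ s + h * t) (hY : Y ≤ t + h / 2 * M * X) :
    X ^ 2 + Y ^ 2 / M ≤ 3 * (s ^ 2 + t ^ 2 / M) := by
  have hX2 : X ^ 2 ≤ 2 * s ^ 2 + 2 * (M * h ^ 2) * (t ^ 2 / M) := by
    field_simp
    nlinarith [pow_le_pow_left₀ hX0 hX 2, sq_nonneg (s - h * t)]
  have hY2 : Y ^ 2 / M ≤ 2 * (t ^ 2 / M) + (M * h ^ 2) / 2 * X ^ 2 := by
    rw [div_le_iff₀ hM]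
    field_simp
    nlinarith [pow_le_pow_left₀ hY0 hY 2, sq_nonneg (t - h / 2 * M * X)]
  have ht : 0 ≤ t ^ 2 / M := by positivity
  nlinarith [mul_le_mul_of_nonneg_right hh ht, mul_le_mul_of_nonneg_right hh (sq_nonneg X)]

theorem modNormSq_le_seven_mul {n : ℕ} {M b h : ℝ} (hM : 0 < M) (hb0 : 0 ≤ b)
    (hb : 9 * M * b ^ 2 ≤ 1) (hh : M * h ^ 2 ≤ 1 / 192)
    {z d : EuclideanSpace ℝ (Fin n) × EuclideanSpace ℝ (Fin n)}
    (hz₁ : ‖z.1‖ ≤ ‖d.1‖ + h * ‖d.2‖) (hz₂ : ‖z.2‖ ≤ ‖d.2‖ + h / 2 * M * ‖z.1‖) :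
    modNormSq (1 / M) b z ≤ 7 * modNormSq (1 / M) b d := by
  have hz : 2 * b * ⟪z.1, z.2⟫ ≤ (‖z.1‖ ^ 2 + ‖z.2‖ ^ 2 / M) / 3 :=
    (mul_le_mul_of_nonneg_left (real_inner_le_norm _ _) (by positivity)).trans
      (two_mul_mul_le hM hb _ _)
  have hd : -((‖d.1‖ ^ 2 + ‖d.2‖ ^ 2 / M) / 3) ≤ 2 * b * ⟪d.1, d.2⟫ := by
    have := two_mul_mul_le hM hb ‖d.1‖ ‖d.2‖
    nlinarith [neg_le_of_abs_le (abs_real_inner_le_norm d.1 d.2)]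
  have hsq := sq_add_sq_div_le hM hh (norm_nonneg _) (norm_nonneg _) hz₁ hz₂
  have hd_nonneg : 0 ≤ ‖d.1‖ ^ 2 + ‖d.2‖ ^ 2 / M := by positivity
  simp only [modNormSq, one_div_mul_eq_div]
  linarith

theorem bbk_parameter_bounds {M γ h : ℝ} (hγ : √(12 * M) ≤ γ) (hh : 0 < h)
    (hh2 : h < 1 / (4 * γ)) :
    9 * M * (h / 2 + 1 / γ) ^ 2 ≤ 1 ∧ M * h ^ 2 ≤ 1 / 192 := by
  have hγ0 : 0 < γ := by
    have := one_div_pos.1 (hh.trans hh2)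
    linarith
  have hγ2 : 12 * M ≤ γ ^ 2 := (Real.sqrt_le_left hγ0.le).1 hγ
  have hhγ : h * γ < 1 / 4 := by
    rw [lt_div_iff₀ (by positivity)] at hh2
    linarith
  have hbγ : (h / 2 + 1 / γ) * γ = h * γ / 2 + 1 := by field_simp
  constructor
  · nlinarith [mul_le_mul_of_nonneg_right hγ2 (sq_nonneg (h / 2 + 1 / γ)), mul_pos hh hγ0]
  · nlinarith [mul_le_mul_of_nonneg_right hγ2 (sq_nonneg h), mul_pos hh hγ0]

theorem bbk_head_prefactor_bound {n : ℕ} (m M γ h : ℝ)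
    (U : EuclideanSpace ℝ (Fin n) → ℝ)
    (hm : 0 < m) (hmM : m < M) (hU : ContDiff ℝ 2 U)
    (hHess : ∀ x d : EuclideanSpace ℝ (Fin n),
      m * ‖d‖ ^ 2 ≤ ⟪fderiv ℝ (gradient U) x d, d⟫ ∧
        ⟪fderiv ℝ (gradient U) x d, d⟫ ≤ M * ‖d‖ ^ 2)
    (hγ : γ ≥ Real.sqrt (12 * M)) (hh : 0 < h) (hh2 : h < 1 / (4 * γ)) :
    ∀ x v x' v' : EuclideanSpace ℝ (Fin n),
      modNormSq (1 / M) (h / 2 + 1 / γ)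
          ((x' + h • v',
              (1 + γ * h / 2)⁻¹ • (v' - (h / 2) • gradient U (x' + h • v'))) -
            (x + h • v,
              (1 + γ * h / 2)⁻¹ • (v - (h / 2) • gradient U (x + h • v)))) ≤
        7 * modNormSq (1 / M) (h / 2 + 1 / γ) (x' - x, v' - v) := by
  intro x v x' v'
  have hM : 0 < M := hm.trans hmM
  have hγ0 : 0 < γ := (Real.sqrt_pos.2 (by positivity)).trans_le hγ
  have hLip : ∀ y y', ‖gradient U y' - gradient U y‖ ≤ M * ‖y' - y‖ := fun y y' =>
    norm_gradient_sub_le hU hM.le (fun x d => abs_le.2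
      ⟨by nlinarith [(hHess x d).1, sq_nonneg ‖d‖], (hHess x d).2⟩) y' y
  obtain ⟨hb, hhM⟩ := bbk_parameter_bounds hγ hh hh2
  exact modNormSq_le_seven_mul (z := bbkHead γ h (gradient U) (x', v') -
      bbkHead γ h (gradient U) (x, v)) (d := (x', v') - (x, v)) hM (by positivity) hb hhM
    (norm_bbkHead_sub_fst_le hh.le _ _) (norm_bbkHead_sub_snd_le hγ0.le hh.le hLip _ _)
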